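/- arXiv:2102.10155 — 2 statements merged into one kernel-verified Lean document; each statement's English description precedes it below -/
import Mathlib

section
/- For integers n, k with 0 < k < n and any integer q \ge 2, the Gaussian binomial coefficient satisfies [n choose k]_q \ge (1 + 1/q) q^{k(n-k)}. -/
/-- The Gaussian binomial coefficient `[m choose l]_q = ∏_{t=1}^{l} (q^{m-t+1}-1)/(q^t-1)`. -/
def gaussBinom (q : ℚ) (m l : ℕ) : ℚ :=
  ∏ t ∈ Finset.range l, (q ^ (m - t) - 1) / (q ^ (t + 1) - 1)

/-!
Reflecting the numerators writes `[c + k choose k]_q` as `∏_{t<k} (q^(c+t+1) - 1) / (q^(t+1) - 1)`.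
Every factor is at least `q^c`, and the factor `t = 0` is `1 + q + ⋯ + q^c ≥ q^c + q^(c-1)`,
which supplies the extra `1 + 1/q`.
-/

section

variable {K : Type*} [Field K] [LinearOrder K] [IsStrictOrderedRing K] {q : K}

lemma pow_le_pow_add_sub_one_div_pow_sub_one (hq : 1 < q) (c : ℕ) {b : ℕ} (hb : b ≠ 0) :
    q ^ c ≤ (q ^ (c + b) - 1) / (q ^ b - 1) := by
  rw [le_div_iff₀ (sub_pos.2 (one_lt_pow₀ hq hb)), mul_sub, ← pow_add, mul_one]
  linarith [one_le_pow₀ (M₀ := K) hq.le (n := c)]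

lemma one_add_inv_mul_pow_le_pow_succ_sub_one_div (hq : 1 < q) {c : ℕ} (hc : c ≠ 0) :
    (1 + q⁻¹) * q ^ c ≤ (q ^ (c + 1) - 1) / (q - 1) := by
  obtain ⟨d, rfl⟩ : ∃ d, c = d + 1 := ⟨c - 1, by omega⟩
  have hq0 : q ≠ 0 := (zero_lt_one.trans hq).ne'
  have expand : (1 + q⁻¹) * q ^ (d + 1) * (q - 1) = q ^ (d + 1 + 1) - q ^ d := by
    field_simp
    ring
  rw [le_div_iff₀ (sub_pos.2 hq), expand]
  linarith [one_le_pow₀ (M₀ := K) hq.le (n := d)]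

lemma pow_mul_le_prod_range_succ {f : ℕ → K} {a b : K} (ha : 0 ≤ a) (hb : 0 ≤ b)
    (hf : ∀ t, a ≤ f (t + 1)) (hf0 : b ≤ f 0) (m : ℕ) :
    a ^ m * b ≤ ∏ t ∈ Finset.range (m + 1), f t := by
  have tail : a ^ m ≤ ∏ t ∈ Finset.range m, f (t + 1) := by
    simpa using Finset.prod_le_prod (s := Finset.range m) (fun _ _ => ha) fun t _ => hf t
  rw [Finset.prod_range_succ']
  exact mul_le_mul tail hf0 hb ((pow_nonneg ha m).trans tail)

end

lemma gaussBinom_add_eq_prod (q : ℚ) (c k : ℕ) :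
    gaussBinom q (c + k) k = ∏ t ∈ Finset.range k, (q ^ (c + t + 1) - 1) / (q ^ (t + 1) - 1) := by
  rw [gaussBinom, Finset.prod_div_distrib, Finset.prod_div_distrib,
    ← Finset.prod_range_reflect (fun t => q ^ (c + k - t) - 1) k]
  congr 1
  refine Finset.prod_congr rfl fun t ht => ?_
  rw [Finset.mem_range] at ht
  congr 2
  omega

theorem gaussBinom_ge_strict (n k : ℕ) (hk0 : 0 < k) (hkn : k < n) (q : ℕ) (hq : 2 ≤ q) :
    (1 + 1 / (q : ℚ)) * (q : ℚ) ^ (k * (n - k)) ≤ gaussBinom (q : ℚ) n k := by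
  have hq1 : (1 : ℚ) < q := by exact_mod_cast hq
  obtain ⟨c, rfl⟩ : ∃ c, n = c + k := ⟨n - k, by omega⟩
  obtain ⟨m, rfl⟩ : ∃ m, k = m + 1 := ⟨k - 1, by omega⟩
  rw [gaussBinom_add_eq_prod, Nat.add_sub_cancel, one_div]
  calc (1 + (q : ℚ)⁻¹) * (q : ℚ) ^ ((m + 1) * c)
      = ((q : ℚ) ^ c) ^ m * ((1 + (q : ℚ)⁻¹) * (q : ℚ) ^ c) := by ring
    _ ≤ _ := pow_mul_le_prod_range_succ (by positivity) (by positivity)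
        (fun t => pow_le_pow_add_sub_one_div_pow_sub_one hq1 c (b := t + 1 + 1) (by omega))
        (by simpa only [add_zero, zero_add, pow_one] using
          one_add_inv_mul_pow_le_pow_succ_sub_one_div hq1 (by omega : c ≠ 0)) m
end

section
/- Let q \ge 3, n = 2d, d \ge 2, 1 \le j \le d-1, and d \le i+j \le 2d-1 with 1 \le i \le d. Then the ratio of consecutive terms satisfies |T_{d-j-1}(i,j)| / |T_{d-j}(i,j)| = q^{i-d}(q^{d-i}-1)(q^{d-j}-1)(q^{j+1}-1) / ((q-1)(q^{(i+j)-d+1}-1)(q^{2d-(i+j)}-1)) < 27/32. -/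
/-- The `h`-th term of the eigenvalue expression for the Grassmann graph `G_q(n,d,j)`:
`T_h(i,j) = (-1)^{i-h} q^{j(j-i+h) + C(i-h,2)} [i,h]_q [d-h,j]_q [n-d-i+h, n-d-j]_q`. -/
def grassT (q : ℚ) (n d i j h : ℕ) : ℚ :=
  (-1 : ℚ) ^ (i - h) * q ^ ((j : ℤ) * ((j : ℤ) - (i : ℤ) + (h : ℤ)) + ((i - h).choose 2 : ℤ)) *
    gaussBinom q i h * gaussBinom q (d - h) j * gaussBinom q (n - d - i + h) (n - d - j)

section GaussBinom

variable (q : ℚ)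

lemma gaussBinom_succ (m l : ℕ) :
    gaussBinom q m (l + 1) = gaussBinom q m l * ((q ^ (m - l) - 1) / (q ^ (l + 1) - 1)) :=
  Finset.prod_range_succ _ _

lemma gaussBinom_succ_mul {m l : ℕ} (hq : q ^ (l + 1) ≠ 1) :
    gaussBinom q m (l + 1) * (q ^ (l + 1) - 1) = gaussBinom q m l * (q ^ (m - l) - 1) := by
  rw [gaussBinom_succ]
  field_simp [sub_ne_zero.2 hq]

lemma gaussBinom_succ_left_mul (m : ℕ) : ∀ l : ℕ,
    gaussBinom q (m + 1) l * (q ^ (m + 1 - l) - 1) = gaussBinom q m l * (q ^ (m + 1) - 1)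
  | 0 => by simp [gaussBinom]
  | l + 1 => by
    rw [gaussBinom_succ, gaussBinom_succ, Nat.add_sub_add_right]
    linear_combination (q ^ (m - l) - 1) / (q ^ (l + 1) - 1) * gaussBinom_succ_left_mul m l

end GaussBinom

lemma gaussBinom_pos {q : ℚ} (hq : 1 < q) {m l : ℕ} (h : l ≤ m) : 0 < gaussBinom q m l :=
  Finset.prod_pos fun t ht => div_pos
    (sub_pos.2 (one_lt_pow₀ hq (by simp only [Finset.mem_range] at ht; omega)))
    (sub_pos.2 (one_lt_pow₀ hq (by omega)))

lemma grassT_mul_eq {q : ℚ} (hq : 1 < q) {n d i j h : ℕ} (hhi : h < i) (hhd : h < d) :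
    grassT q n d i j h *
        ((q ^ (i - h) - 1) * (q ^ (d - h - j) - 1) * (q ^ (n - d - i + h + 1) - 1)) =
      -(q ^ ((i : ℤ) - h - 1 - j) *
        ((q ^ (h + 1) - 1) * (q ^ (d - h) - 1) * (q ^ (n - d - i + h + 1 - (n - d - j)) - 1))) *
        grassT q n d i j (h + 1) := by
  obtain ⟨x, hx⟩ : ∃ x, i - h = x + 1 := ⟨i - h - 1, by omega⟩
  unfold grassT
  rw [show i - (h + 1) = x by omega, show d - (h + 1) = d - h - 1 by omega,
    show n - d - i + (h + 1) = n - d - i + h + 1 by omega]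
  set N := n - d - i + h
  set L := n - d - j
  set E : ℤ := j * (j - i + (h + 1 : ℕ)) + (x.choose 2 : ℕ)
  have hexp : (j : ℤ) * (j - i + h) + ((i - h).choose 2 : ℕ) = E + (i - h - 1 - j) := by
    have hxz : (x : ℤ) = i - h - 1 := by omega
    rw [hx, Nat.choose_succ_succ', Nat.choose_one_right]
    simp only [E]
    push_cast
    linear_combination hxz
  have hA := gaussBinom_succ_mul q (m := i) (l := h) (one_lt_pow₀ hq (by omega)).ne'
  have hB := gaussBinom_succ_left_mul q (d - h - 1) j
  have hC := gaussBinom_succ_left_mul q N L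
  rw [show d - h - 1 + 1 = d - h by omega] at hB
  have key : gaussBinom q i h * (q ^ (i - h) - 1) *
        (gaussBinom q (d - h) j * (q ^ (d - h - j) - 1)) * (gaussBinom q N L * (q ^ (N + 1) - 1)) =
      gaussBinom q i (h + 1) * (q ^ (h + 1) - 1) *
        (gaussBinom q (d - h - 1) j * (q ^ (d - h) - 1)) *
        (gaussBinom q (N + 1) L * (q ^ (N + 1 - L) - 1)) := by
    rw [hA, hB, hC]
  have hsign : (-1 : ℚ) ^ (i - h) = -(-1) ^ x := by rw [hx, pow_succ, mul_neg_one]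
  rw [hsign, hexp, zpow_add₀ (by positivity)]
  linear_combination (-(-1) ^ x * q ^ E * q ^ ((i : ℤ) - h - 1 - j)) * key

lemma grassT_ne_zero {q : ℚ} (hq : 1 < q) {n d i j h : ℕ} (hhi : h ≤ i) (hj : j ≤ d - h)
    (hl : n - d - j ≤ n - d - i + h) : grassT q n d i j h ≠ 0 := by
  have := gaussBinom_pos hq hhi
  have := gaussBinom_pos hq hj
  have := gaussBinom_pos hq hl
  have : 0 < q := by linarith
  unfold grassT
  positivity

section OrderedField

variable {K : Type*} [Field K] [LinearOrder K] [IsStrictOrderedRing K]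

lemma sub_one_mul_pow_sub_one_le {q : K} (hq : 1 ≤ q) (a b : ℕ) :
    (q - 1) * (q ^ (a + b + 1) - 1) ≤ (q ^ (a + 1) - 1) * (q ^ (b + 1) - 1) := by
  have ha : 0 ≤ q ^ a - 1 := sub_nonneg.2 (one_le_pow₀ hq)
  have hb : 0 ≤ q ^ b - 1 := sub_nonneg.2 (one_le_pow₀ hq)
  have hdiff : (q ^ (a + 1) - 1) * (q ^ (b + 1) - 1) - (q - 1) * (q ^ (a + b + 1) - 1) =
      q * ((q ^ a - 1) * (q ^ b - 1)) := by ring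
  nlinarith [mul_nonneg ha hb]

lemma pow_sub_one_mul_pow_sub_one_lt {q : K} (hq : 1 ≤ q) (a b : ℕ) :
    (q ^ a - 1) * (q ^ b - 1) < q ^ (a + b) := by
  have ha : 1 ≤ q ^ a := one_le_pow₀ hq
  have hb : 1 ≤ q ^ b := one_le_pow₀ hq
  have hexp : q ^ (a + b) - (q ^ a - 1) * (q ^ b - 1) = q ^ a + q ^ b - 1 := by ring
  linarith

lemma thirty_two_mul_pow_succ_le {q : K} (hq : 3 ≤ q) {d : ℕ} (hd : 2 ≤ d) :
    32 * q ^ (d + 1) ≤ 27 * (q - 1) ^ 2 * (q ^ d - 1) := by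
  have hqd : q ^ 2 ≤ q ^ d := pow_le_pow_right₀ (by linarith) hd
  have h3 : 0 ≤ q - 3 := by linarith
  rw [pow_succ]
  nlinarith [mul_nonneg h3 (sub_nonneg.2 hqd), mul_nonneg (mul_nonneg h3 h3) (sub_nonneg.2 hqd),
    mul_nonneg h3 h3, sq_nonneg q, mul_nonneg (mul_nonneg h3 h3) h3]

def grassRatio (q : K) (d i j : ℕ) : K :=
  q ^ ((i : ℤ) - (d : ℤ)) * (q ^ (d - i) - 1) * (q ^ (d - j) - 1) * (q ^ (j + 1) - 1) /
    ((q - 1) * (q ^ ((i + j) - d + 1) - 1) * (q ^ (2 * d - (i + j)) - 1))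

lemma grassRatio_nonneg {q : K} (hq : 1 ≤ q) (d i j : ℕ) : 0 ≤ grassRatio q d i j := by
  have hpow : ∀ t : ℕ, 0 ≤ q ^ t - 1 := fun t => sub_nonneg.2 (one_le_pow₀ hq)
  have : 0 < q := by linarith
  unfold grassRatio
  have := hpow (d - i)
  have := hpow (d - j)
  have := hpow (j + 1)
  have := hpow (i + j - d + 1)
  have := hpow (2 * d - (i + j))
  have : 0 ≤ q - 1 := by linarith
  positivity

lemma grassRatio_lt {q : K} (hq : 3 ≤ q) {d i j : ℕ} (hd : 2 ≤ d) (hj : j < d)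
    (hi : i ≤ d) (hij1 : d ≤ i + j) (hij2 : i + j < 2 * d) :
    grassRatio q d i j < 27 / 32 := by
  have hq1 : 1 ≤ q := by linarith
  have hpos : ∀ t : ℕ, 1 ≤ t → 0 < q ^ t - 1 := fun t ht =>
    sub_pos.2 (one_lt_pow₀ (by linarith) (by omega))
  have hden : 0 < (q - 1) * (q ^ ((i + j) - d + 1) - 1) * (q ^ (2 * d - (i + j)) - 1) := by
    have := hpos (i + j - d + 1) (by omega)
    have := hpos (2 * d - (i + j)) (Nat.sub_pos_of_lt hij2)
    have : 0 < q - 1 := by linarith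
    positivity
  have hlead : q ^ ((i : ℤ) - (d : ℤ)) * (q ^ (d - i) - 1) ≤ 1 := by
    rw [show (i : ℤ) - d = -(d - i : ℕ) by omega, zpow_neg, zpow_natCast,
      inv_mul_le_iff₀ (by positivity)]
    linarith
  have hnum := pow_sub_one_mul_pow_sub_one_lt hq1 (d - j) (j + 1)
  have hsplit := sub_one_mul_pow_sub_one_le hq1 (i + j - d) (2 * d - (i + j) - 1)
  rw [show d - j + (j + 1) = d + 1 by omega] at hnum
  rw [show i + j - d + (2 * d - (i + j) - 1) + 1 = d by omega,
    show 2 * d - (i + j) - 1 + 1 = 2 * d - (i + j) by omega] at hsplit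
  have hbound := thirty_two_mul_pow_succ_le hq hd
  have hnum_nonneg : 0 ≤ (q ^ (d - j) - 1) * (q ^ (j + 1) - 1) :=
    (mul_pos (hpos _ (by omega)) (hpos _ (by omega))).le
  rw [grassRatio, div_lt_iff₀ hden]
  calc q ^ ((i : ℤ) - (d : ℤ)) * (q ^ (d - i) - 1) * (q ^ (d - j) - 1) * (q ^ (j + 1) - 1)
      = q ^ ((i : ℤ) - (d : ℤ)) * (q ^ (d - i) - 1) *
          ((q ^ (d - j) - 1) * (q ^ (j + 1) - 1)) := by ring
    _ ≤ (q ^ (d - j) - 1) * (q ^ (j + 1) - 1) := mul_le_of_le_one_left hnum_nonneg hlead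
    _ < q ^ (d + 1) := hnum
    _ ≤ 27 / 32 * ((q - 1) * ((q - 1) * (q ^ d - 1))) := by linarith
    _ ≤ 27 / 32 * ((q - 1) * (q ^ ((i + j) - d + 1) - 1) * (q ^ (2 * d - (i + j)) - 1)) := by
        rw [mul_assoc (q - 1)]
        gcongr

end OrderedField

lemma grassT_div_grassT {q : ℚ} (hq : 1 < q) {d i j : ℕ} (hj : j < d) (hi : i ≤ d)
    (hij1 : d ≤ i + j) (hij2 : i + j < 2 * d) :
    grassT q (2 * d) d i j (d - j - 1) / grassT q (2 * d) d i j (d - j) = -grassRatio q d i j := by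
  have hrel := grassT_mul_eq hq (n := 2 * d) (d := d) (i := i) (j := j) (h := d - j - 1)
    (by omega) (by omega)
  rw [show d - j - 1 + 1 = d - j by omega, show i - (d - j - 1) = i + j - d + 1 by omega,
    show d - (d - j - 1) - j = 1 by omega, show d - (d - j - 1) = j + 1 by omega,
    show 2 * d - d - i + (d - j - 1) + 1 = 2 * d - (i + j) by omega,
    show 2 * d - (i + j) - (2 * d - d - j) = d - i by omega,
    show (i : ℤ) - (d - j - 1 : ℕ) - 1 - j = i - d by omega, pow_one] at hrel
  have hpos : ∀ t : ℕ, 1 ≤ t → q ^ t - 1 ≠ 0 := fun t ht =>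
    (sub_pos.2 (one_lt_pow₀ hq (by omega))).ne'
  have h1 := hpos (i + j - d + 1) (by omega)
  have h2 := hpos (2 * d - (i + j)) (Nat.sub_pos_of_lt hij2)
  have h3 : q - 1 ≠ 0 := by linarith
  rw [div_eq_iff (grassT_ne_zero hq (by omega) (by omega) (by omega)), grassRatio]
  field_simp
  linear_combination hrel

theorem grass_ratio_lt_general (q n d i j : ℕ) (hq : 3 ≤ q) (hn : n = 2 * d) (hd : 2 ≤ d)
    (hj2 : j ≤ d - 1) (hi2 : i ≤ d)
    (hij1 : d ≤ i + j) (hij2 : i + j ≤ 2 * d - 1) :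
    |grassT (q : ℚ) n d i j (d - j - 1)| / |grassT (q : ℚ) n d i j (d - j)| =
      (q : ℚ) ^ ((i : ℤ) - (d : ℤ)) * ((q : ℚ) ^ (d - i) - 1) * ((q : ℚ) ^ (d - j) - 1) *
          ((q : ℚ) ^ (j + 1) - 1) /
        (((q : ℚ) - 1) * ((q : ℚ) ^ ((i + j) - d + 1) - 1) * ((q : ℚ) ^ (2 * d - (i + j)) - 1)) ∧
    (q : ℚ) ^ ((i : ℤ) - (d : ℤ)) * ((q : ℚ) ^ (d - i) - 1) * ((q : ℚ) ^ (d - j) - 1) *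
          ((q : ℚ) ^ (j + 1) - 1) /
        (((q : ℚ) - 1) * ((q : ℚ) ^ ((i + j) - d + 1) - 1) * ((q : ℚ) ^ (2 * d - (i + j)) - 1)) <
      27 / 32 := by
  subst hn
  have hq3 : (3 : ℚ) ≤ q := by exact_mod_cast hq
  have hjd : j < d := Nat.lt_of_le_sub_one (by omega) hj2
  have hij : i + j < 2 * d := Nat.lt_of_le_sub_one (by omega) hij2
  refine ⟨?_, grassRatio_lt hq3 hd hjd hi2 hij1 hij⟩
  rw [← abs_div, grassT_div_grassT (by linarith) hjd hi2 hij1 hij, abs_neg,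
    abs_of_nonneg (grassRatio_nonneg (by linarith) d i j), grassRatio]

theorem grass_ratio_lt (q n d i j : ℕ) (hq : 3 ≤ q) (hn : n = 2 * d) (hd : 2 ≤ d)
    (hj1 : 1 ≤ j) (hj2 : j ≤ d - 1) (hi1 : 1 ≤ i) (hi2 : i ≤ d)
    (hij1 : d ≤ i + j) (hij2 : i + j ≤ 2 * d - 1) :
    |grassT (q : ℚ) n d i j (d - j - 1)| / |grassT (q : ℚ) n d i j (d - j)| =
      (q : ℚ) ^ ((i : ℤ) - (d : ℤ)) * ((q : ℚ) ^ (d - i) - 1) * ((q : ℚ) ^ (d - j) - 1) *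
          ((q : ℚ) ^ (j + 1) - 1) /
        (((q : ℚ) - 1) * ((q : ℚ) ^ ((i + j) - d + 1) - 1) * ((q : ℚ) ^ (2 * d - (i + j)) - 1)) ∧
    (q : ℚ) ^ ((i : ℤ) - (d : ℤ)) * ((q : ℚ) ^ (d - i) - 1) * ((q : ℚ) ^ (d - j) - 1) *
          ((q : ℚ) ^ (j + 1) - 1) /
        (((q : ℚ) - 1) * ((q : ℚ) ^ ((i + j) - d + 1) - 1) * ((q : ℚ) ^ (2 * d - (i + j)) - 1)) <
      27 / 32 :=
  grass_ratio_lt_general q n d i j hq hn hd hj2 hi2 hij1 hij2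
end
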